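/- arXiv:2602.03353 — 7 statements merged into one kernel-verified Lean document; each statement's English description precedes it below -/
import Mathlib

section
/- In a finite DAG, every basis has cardinality at most the number of sources. Precisely: let V be a finite vertex set and E a directed edge relation on V whose transitive closure is irreflexive (so (V,E) is a finite DAG); then every basis B of (V,E) satisfies |B| ≤ |{S ∈ V : S is a source}|. -/
/-- Two vertices are dependent if they share a common ancestor
(ancestorship via the reflexive-transitive closure of the edge relation). -/
def Dep {V : Type*} (E : V → V → Prop) (x y : V) : Prop :=
  ∃ a, Relation.ReflTransGen E a x ∧ Relation.ReflTransGen E a y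

/-- A basis: a set of pairwise independent vertices such that every vertex
outside the set is dependent on some vertex of the set. -/
def IsBasis {V : Type*} (E : V → V → Prop) (B : Set V) : Prop :=
  (∀ x ∈ B, ∀ y ∈ B, x ≠ y → ¬ Dep E x y) ∧ ∀ x ∉ B, ∃ b ∈ B, Dep E x b

/-! Sending each vertex to a source among its ancestors is injective on a basis, since two
basis vertices with the same source ancestor would be dependent. Such a source exists because
the edge relation of a finite DAG is well founded. -/

theorem wellFounded_of_finite_of_irreflexive_transGen {V : Type*} [Finite V] {E : V → V → Prop}
    (hdag : Irreflexive (Relation.TransGen E)) : WellFounded E :=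
  Subrelation.wf Relation.TransGen.single
    (@Finite.wellFounded_of_trans_of_irrefl _ _ _ ⟨fun _ _ _ ↦ Relation.TransGen.trans⟩ ⟨hdag⟩)

theorem exists_source_reflTransGen {V : Type*} {E : V → V → Prop} (hwf : WellFounded E) (x : V) :
    ∃ s, Relation.ReflTransGen E s x ∧ ∀ a, ¬ E a s := by
  obtain ⟨s, hsx, hmin⟩ := hwf.has_min {s | Relation.ReflTransGen E s x} ⟨x, .refl⟩
  exact ⟨s, hsx, fun a has ↦ hmin a (Relation.ReflTransGen.head has hsx) has⟩

theorem injOn_of_pairwise_not_dep {V : Type*} {E : V → V → Prop} {B : Set V} {f : V → V}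
    (hB : ∀ x ∈ B, ∀ y ∈ B, x ≠ y → ¬ Dep E x y) (hf : ∀ x, Relation.ReflTransGen E (f x) x) :
    Set.InjOn f B := by
  intro x hx y hy hxy
  by_contra hne
  exact hB x hx y hy hne ⟨f x, hf x, hxy ▸ hf y⟩

/-- In a finite DAG, every basis has cardinality at most the number of sources. -/
theorem basis_card_le_sources {V : Type*} [Fintype V] (E : V → V → Prop)
    (hdag : Irreflexive (Relation.TransGen E))
    (B : Set V) (hB : IsBasis E B) :
    B.ncard ≤ {S : V | ∀ A, ¬ E A S}.ncard := by
  choose source source_anc source_isSource using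
    exists_source_reflTransGen (wellFounded_of_finite_of_irreflexive_transGen hdag)
  exact Set.ncard_le_ncard_of_injOn source (fun x _ ↦ source_isSource x)
    (injOn_of_pairwise_not_dep hB.1 source_anc) (Set.toFinite _)
end

section
/- In a finite DAG, the maximum cardinality of a basis equals the number of sources: there exists a basis whose cardinality equals the number of sources, and every basis has cardinality at most the number of sources. -/
section Sources

variable {V : Type*} {E : V → V → Prop}

def IsSource (E : V → V → Prop) (s : V) : Prop :=
  ∀ a, ¬ E a s

theorem IsSource.eq_of_reflTransGen {s a : V} (hs : IsSource E s)
    (h : Relation.ReflTransGen E a s) : a = s := by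
  rcases h.cases_tail with h | ⟨c, _, hc⟩
  · exact h.symm
  · exact absurd hc (hs c)

theorem IsSource.not_dep {s t : V} (hs : IsSource E s) (ht : IsSource E t) (hst : s ≠ t) :
    ¬ Dep E s t := by
  rintro ⟨a, has, hat⟩
  exact hst ((hs.eq_of_reflTransGen has).symm.trans (ht.eq_of_reflTransGen hat))

theorem wellFounded_of_irreflexive_transGen [Finite V]
    (hdag : ∀ x, ¬ Relation.TransGen E x x) : WellFounded E :=
  haveI : Std.Irrefl (Relation.TransGen E) := ⟨hdag⟩
  Subrelation.wf Relation.TransGen.single (Finite.wellFounded_of_trans_of_irrefl _)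

theorem exists_isSource_reflTransGen (hwf : WellFounded E) (x : V) :
    ∃ s, IsSource E s ∧ Relation.ReflTransGen E s x := by
  induction x using hwf.induction with
  | _ x ih =>
    by_cases hx : IsSource E x
    · exact ⟨x, hx, .refl⟩
    · obtain ⟨a, ha⟩ : ∃ a, E a x := by simpa [IsSource] using hx
      obtain ⟨s, hs, hsa⟩ := ih a ha
      exact ⟨s, hs, hsa.tail ha⟩

theorem isBasis_setOf_isSource (hwf : WellFounded E) : IsBasis E {s | IsSource E s} := by
  refine ⟨fun s hs t ht hst => hs.not_dep ht hst, fun x _ => ?_⟩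
  obtain ⟨s, hs, hsx⟩ := exists_isSource_reflTransGen hwf x
  exact ⟨s, hs, s, hsx, .refl⟩

theorem ncard_le_ncard_setOf_isSource [Finite V] (hwf : WellFounded E) {B : Set V}
    (hB : B.Pairwise fun x y => ¬ Dep E x y) : B.ncard ≤ {s | IsSource E s}.ncard := by
  choose f hf_source hf_anc using exists_isSource_reflTransGen hwf
  refine Set.ncard_le_ncard_of_injOn f (fun b _ => hf_source b) fun b hb b' hb' hbb' => ?_
  by_contra hne
  exact hB hb hb' hne ⟨f b, hf_anc b, hbb' ▸ hf_anc b'⟩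

end Sources

/-- In a finite DAG, the maximum cardinality of a basis equals the number of
sources: some basis attains the number of sources, and every basis is bounded
above by it. -/
theorem max_basis_card_eq_sources {V : Type*} [Fintype V] (E : V → V → Prop)
    (hdag : Irreflexive (Relation.TransGen E)) :
    (∃ B : Set V, IsBasis E B ∧ B.ncard = {S : V | ∀ A, ¬ E A S}.ncard) ∧
    (∀ B : Set V, IsBasis E B → B.ncard ≤ {S : V | ∀ A, ¬ E A S}.ncard) := by
  have hwf := wellFounded_of_irreflexive_transGen hdag
  exact ⟨⟨{s | IsSource E s}, isBasis_setOf_isSource hwf, rfl⟩,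
    fun B hB => ncard_le_ncard_setOf_isSource hwf hB.1⟩
end

section
/- In a finite DAG, if a vertex X minimizes the cardinality of the dependence set, i.e. |Φ(X)| ≤ |Φ(Y)| for all vertices Y, then X has exactly one source ancestor: there is a unique source S that is an ancestor of X. -/
/-- The dependence set of a vertex: all vertices dependent on it. -/
def Phi {V : Type*} (E : V → V → Prop) (x : V) : Set V := {y | Dep E x y}

section Sources

variable {V : Type*} {E : V → V → Prop}

theorem wellFounded_of_transGen_irrefl [Finite V] (h : ∀ a, ¬ Relation.TransGen E a a) :
    WellFounded E :=
  have : Std.Irrefl (Relation.TransGen E) := ⟨h⟩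
  Subrelation.wf Relation.TransGen.single (Finite.wellFounded_of_trans_of_irrefl _)

theorem exists_source_reflTransGen_s3 (hwf : WellFounded E) (X : V) :
    ∃ S, (∀ A, ¬ E A S) ∧ Relation.ReflTransGen E S X := by
  obtain ⟨S, hSX, hSmin⟩ := hwf.has_min {a | Relation.ReflTransGen E a X} ⟨X, .refl⟩
  exact ⟨S, fun A hA => hSmin A (.head hA hSX) hA, hSX⟩

theorem eq_of_reflTransGen_source {S a : V} (hS : ∀ A, ¬ E A S)
    (h : Relation.ReflTransGen E a S) : a = S := by
  rcases h.cases_tail with h | ⟨b, _, hb⟩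
  · exact h.symm
  · exact absurd hb (hS b)

theorem Dep.eq_of_sources {S T : V} (hS : ∀ A, ¬ E A S) (hT : ∀ A, ¬ E A T)
    (h : Dep E S T) : S = T := by
  obtain ⟨a, haS, haT⟩ := h
  exact (eq_of_reflTransGen_source hS haS).symm.trans (eq_of_reflTransGen_source hT haT)

theorem phi_subset_of_source {T X : V} (hT : ∀ A, ¬ E A T)
    (hTX : Relation.ReflTransGen E T X) : Phi E T ⊆ Phi E X := by
  rintro y ⟨a, haT, hay⟩
  obtain rfl := eq_of_reflTransGen_source hT haT
  exact ⟨a, hTX, hay⟩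

theorem phi_ssubset_of_sources {S T X : V} (hS : ∀ A, ¬ E A S) (hT : ∀ A, ¬ E A T)
    (hSX : Relation.ReflTransGen E S X) (hTX : Relation.ReflTransGen E T X) (hne : T ≠ S) :
    Phi E T ⊂ Phi E X :=
  (Set.ssubset_iff_of_subset (phi_subset_of_source hT hTX)).mpr
    ⟨S, ⟨S, hSX, .refl⟩, fun hTS => hne (hTS.eq_of_sources hT hS)⟩

end Sources

/-- In a finite DAG, a vertex minimizing the cardinality of its dependence set
has exactly one source ancestor. -/
theorem min_dep_set_unique_source_ancestor {V : Type*} [Fintype V] (E : V → V → Prop)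
    (hdag : Irreflexive (Relation.TransGen E))
    (X : V) (hmin : ∀ Y : V, (Phi E X).ncard ≤ (Phi E Y).ncard) :
    ∃! S : V, (∀ A, ¬ E A S) ∧ Relation.ReflTransGen E S X := by
  obtain ⟨S, hS, hSX⟩ := exists_source_reflTransGen_s3 (wellFounded_of_transGen_irrefl hdag) X
  refine ⟨S, ⟨hS, hSX⟩, fun T ⟨hT, hTX⟩ => ?_⟩
  by_contra hne
  exact (hmin T).not_gt (Set.ncard_lt_ncard (phi_ssubset_of_sources hS hT hSX hTX hne))
end

section
/- In a finite DAG, if a vertex X has two distinct source ancestors S₁ and S₂, then Φ(S₁) ∪ Φ(S₂) ⊆ Φ(X), and consequently |Φ(X)| ≥ |Φ(S₁)| + 1 (strictly larger than |Φ(S₁)|). -/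
/-! A source has no ancestor but itself, so the vertices dependent on a source are exactly its
descendants; these are all dependent on any descendant `X` of the source, through the source.
Two distinct sources are independent, so a second source ancestor of `X` lies in `Φ(X)` but not
in `Φ(S₁)`, which makes the inclusion `Φ(S₁) ⊆ Φ(X)` strict. -/

section

variable {V : Type*} {E : V → V → Prop}

lemma self_mem_phi (x : V) : x ∈ Phi E x :=
  ⟨x, .refl, .refl⟩

lemma eq_of_reflTransGen_of_forall_not_rel {a s : V} (hs : ∀ b, ¬ E b s)
    (h : Relation.ReflTransGen E a s) : a = s := by
  rcases h.cases_tail with rfl | ⟨b, -, hb⟩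
  · rfl
  · exact absurd hb (hs b)

lemma phi_eq_descendants_of_forall_not_rel {s : V} (hs : ∀ b, ¬ E b s) :
    Phi E s = {y | Relation.ReflTransGen E s y} := by
  ext y
  constructor
  · rintro ⟨a, has, hay⟩
    rwa [← eq_of_reflTransGen_of_forall_not_rel hs has]
  · exact fun hsy => ⟨s, .refl, hsy⟩

lemma descendants_subset_phi {a x : V} (hax : Relation.ReflTransGen E a x) :
    {y | Relation.ReflTransGen E a y} ⊆ Phi E x :=
  fun _ hay => ⟨a, hax, hay⟩

lemma phi_subset_phi_of_reflTransGen {s x : V} (hs : ∀ b, ¬ E b s)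
    (hsx : Relation.ReflTransGen E s x) : Phi E s ⊆ Phi E x :=
  phi_eq_descendants_of_forall_not_rel hs ▸ descendants_subset_phi hsx

lemma notMem_phi_of_ne_of_forall_not_rel {s t : V} (hst : s ≠ t)
    (hs : ∀ b, ¬ E b s) (ht : ∀ b, ¬ E b t) : t ∉ Phi E s := by
  rintro ⟨a, has, hat⟩
  exact hst ((eq_of_reflTransGen_of_forall_not_rel hs has).symm.trans
    (eq_of_reflTransGen_of_forall_not_rel ht hat))

end

theorem two_source_ancestors_dep_set_general {V : Type*} [Fintype V] (E : V → V → Prop)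
    (X S₁ S₂ : V) (hne : S₁ ≠ S₂)
    (hS₁ : ∀ A, ¬ E A S₁) (hS₂ : ∀ A, ¬ E A S₂)
    (hanc₁ : Relation.ReflTransGen E S₁ X) (hanc₂ : Relation.ReflTransGen E S₂ X) :
    Phi E S₁ ∪ Phi E S₂ ⊆ Phi E X ∧ (Phi E S₁).ncard + 1 ≤ (Phi E X).ncard := by
  have hsub₁ := phi_subset_phi_of_reflTransGen hS₁ hanc₁
  have hsub₂ := phi_subset_phi_of_reflTransGen hS₂ hanc₂
  have hssub : Phi E S₁ ⊂ Phi E X := (Set.ssubset_iff_of_subset hsub₁).2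
    ⟨S₂, hsub₂ (self_mem_phi S₂), notMem_phi_of_ne_of_forall_not_rel hne hS₁ hS₂⟩
  exact ⟨Set.union_subset hsub₁ hsub₂, Set.ncard_lt_ncard hssub (Set.toFinite _)⟩

/-- In a finite DAG, if a vertex has two distinct source ancestors S₁ and S₂,
then Φ(S₁) ∪ Φ(S₂) ⊆ Φ(X) and |Φ(X)| ≥ |Φ(S₁)| + 1. -/
theorem two_source_ancestors_dep_set {V : Type*} [Fintype V] (E : V → V → Prop)
    (hdag : Irreflexive (Relation.TransGen E))
    (X S₁ S₂ : V) (hne : S₁ ≠ S₂)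
    (hS₁ : ∀ A, ¬ E A S₁) (hS₂ : ∀ A, ¬ E A S₂)
    (hanc₁ : Relation.ReflTransGen E S₁ X) (hanc₂ : Relation.ReflTransGen E S₂ X) :
    Phi E S₁ ∪ Phi E S₂ ⊆ Phi E X ∧ (Phi E S₁).ncard + 1 ≤ (Phi E X).ncard :=
  two_source_ancestors_dep_set_general E X S₁ S₂ hne hS₁ hS₂ hanc₁ hanc₂
end

section
/- Let (V,E) be a finite DAG and let X ∈ V be a vertex with no outgoing edge and at least one incoming edge. If B' is a basis of the induced sub-DAG on V \ {X} (with edge relation E restricted to V \ {X}), then B' is also a basis of (V,E). -/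
/-- A basis of the graph induced on the vertex subset `W` (with the edge
relation implicitly restricted to `W`): a subset of `W` of pairwise independent
vertices such that every vertex of `W` outside the set is dependent on some
vertex of the set. -/
def IsBasisOn {V : Type*} (E : V → V → Prop) (W : Set V) (B : Set V) : Prop :=
  B ⊆ W ∧ (∀ x ∈ B, ∀ y ∈ B, x ≠ y → ¬ Dep E x y) ∧
    ∀ x ∈ W, x ∉ B → ∃ b ∈ B, Dep E x b

/-- Removing a non-source sink X from a finite DAG: any basis of the induced
sub-DAG on V \ {X} is also a basis of the full DAG. -/
theorem basis_of_subdag_is_basis {V : Type*} [Fintype V] (E : V → V → Prop)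
    (hdag : Irreflexive (Relation.TransGen E))
    (X : V) (hsink : ∀ y, ¬ E X y) (hin : ∃ u, E u X)
    (B' : Set V)
    (hB' : IsBasisOn (fun a b => a ≠ X ∧ b ≠ X ∧ E a b) {v : V | v ≠ X} B') :
    IsBasisOn E Set.univ B' := by
  obtain ⟨hBsub, hindep, hcov⟩ := hB'
  set E' : V → V → Prop := fun a b => a ≠ X ∧ b ≠ X ∧ E a b with hE'
  -- any path in E ending away from X is a path in E'
  have key : ∀ a x : V, Relation.ReflTransGen E a x → x ≠ X →
      Relation.ReflTransGen E' a x := by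
    intro a x h
    induction h using Relation.ReflTransGen.head_induction_on with
    | refl => intro _; exact Relation.ReflTransGen.refl
    | head hab hbx ih =>
      rename_i a' b'
      intro hx
      have ha : a' ≠ X := fun h => hsink b' (h ▸ hab)
      have hb : b' ≠ X := by
        rintro rfl
        rcases hbx.cases_head with rfl | ⟨c, hc, _⟩
        · exact hx rfl
        · exact hsink c hc
      exact Relation.ReflTransGen.head ⟨ha, hb, hab⟩ (ih hx)
  have mono : ∀ a x : V, Relation.ReflTransGen E' a x → Relation.ReflTransGen E a x :=
    fun a x h => Relation.ReflTransGen.mono (fun _ _ h => h.2.2) a x h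
  refine ⟨fun _ _ => trivial, ?_, ?_⟩
  · intro x hx y hy hxy ⟨a, hax, hay⟩
    exact hindep x hx y hy hxy ⟨a, key a x hax (hBsub hx), key a y hay (hBsub hy)⟩
  · intro x _ hxB
    by_cases hxX : x = X
    · obtain ⟨u, hu⟩ := hin
      have hux : E u x := hxX ▸ hu
      have huX : u ≠ X := fun h => hsink X (h ▸ hu)
      by_cases huB : u ∈ B'
      · exact ⟨u, huB, u, Relation.ReflTransGen.single hux, Relation.ReflTransGen.refl⟩
      · obtain ⟨b, hb, a, hau, hab⟩ := hcov u huX huB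
        exact ⟨b, hb, a, (mono a u hau).trans (Relation.ReflTransGen.single hux),
          mono a b hab⟩
    · obtain ⟨b, hb, a, hax, hab⟩ := hcov x hxX hxB
      exact ⟨b, hb, a, mono a x hax, mono a b hab⟩
end

section
/- Let B be a finite type, P a probability vector on B, 0 < γ₀ ≤ 1, and b_k ∈ B with q := P(b_k) satisfying q ≤ γ₀ and q < 1. Define α := (1 − q/γ₀)/(1 − q) and P⁽ᵏ⁾(b) := α·P(b) + (1 − α)·δ_{b_k}(b), where δ_{b_k}(b) = 1 if b = b_k and 0 otherwise. Then P⁽ᵏ⁾ is a probability vector on B, γ₀·P⁽ᵏ⁾(b) ≤ P(b) for every b ∈ B, and γ₀·P⁽ᵏ⁾(b_k) = P(b_k) (so the constraint is tight at b_k and the induced inverse downsampling rate of P⁽ᵏ⁾ equals γ₀). -/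
/-!
Since `1 - α = (q/γ₀ - q)/(1 - q)`, the bounds `q ≤ γ₀ ≤ 1` give `α ∈ [0, 1]`, so `P⁽ᵏ⁾` is a
convex combination of two points of the simplex. Off `b_k` it equals `α P`, and `γ₀ α ≤ 1` is again
`γ₀ ≤ 1`; at `b_k` the weights are chosen so that `P⁽ᵏ⁾(b_k) = q/γ₀`.
-/

/-- The weight of `P` in the mixture `P⁽ᵏ⁾ = α P + (1 - α) δ_{b_k}`, with `q = P(b_k)`. -/
noncomputable def boundaryWeight (γ₀ q : ℝ) : ℝ := (1 - q / γ₀) / (1 - q)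

section boundaryWeight

variable {γ₀ q : ℝ}

lemma boundaryWeight_nonneg (hγ : 0 < γ₀) (hq : q ≤ γ₀) (hq1 : q < 1) :
    0 ≤ boundaryWeight γ₀ q :=
  div_nonneg (sub_nonneg.2 ((div_le_one hγ).2 hq)) (sub_nonneg.2 hq1.le)

lemma boundaryWeight_le_one (hγ : 0 < γ₀) (hγ1 : γ₀ ≤ 1) (hq0 : 0 ≤ q) (hq1 : q < 1) :
    boundaryWeight γ₀ q ≤ 1 := by
  have hq_le : q ≤ q / γ₀ := (le_div_iff₀ hγ).2 (mul_le_of_le_one_right hq0 hγ1)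
  rw [boundaryWeight, div_le_one (sub_pos.2 hq1)]
  linarith

lemma mul_boundaryWeight_eq (hγ : 0 < γ₀) :
    γ₀ * boundaryWeight γ₀ q = (γ₀ - q) / (1 - q) := by
  rw [boundaryWeight, ← mul_div_assoc, mul_sub, mul_one, mul_div_cancel₀ _ hγ.ne']

lemma mul_boundaryWeight_le_one (hγ : 0 < γ₀) (hγ1 : γ₀ ≤ 1) (hq1 : q < 1) :
    γ₀ * boundaryWeight γ₀ q ≤ 1 := by
  rw [mul_boundaryWeight_eq hγ, div_le_one (sub_pos.2 hq1)]
  linarith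

lemma mul_boundaryWeight_mix_eq (hγ : 0 < γ₀) (hq1 : q < 1) :
    γ₀ * (boundaryWeight γ₀ q * q + (1 - boundaryWeight γ₀ q)) = q := by
  have hq : 1 - q ≠ 0 := (sub_pos.2 hq1).ne'
  rw [mul_add, mul_sub, mul_one, ← mul_assoc, mul_boundaryWeight_eq hγ]
  field_simp
  ring

end boundaryWeight

lemma smul_add_smul_single_mem_stdSimplex {B : Type*} [Fintype B] [DecidableEq B]
    {P : B → ℝ} (hP : P ∈ stdSimplex ℝ B) (bk : B) {α : ℝ} (hα0 : 0 ≤ α) (hα1 : α ≤ 1) :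
    α • P + (1 - α) • Pi.single bk 1 ∈ stdSimplex ℝ B :=
  convex_stdSimplex ℝ B hP (single_mem_stdSimplex ℝ bk) hα0 (sub_nonneg.2 hα1) (by ring)

/-- The convex-hull boundary points: P⁽ᵏ⁾ = α·P + (1−α)·δ_{b_k} with
α = (1 − q/γ₀)/(1 − q) is a probability vector satisfying γ₀·P⁽ᵏ⁾(b) ≤ P(b)
everywhere, with equality at b_k. -/
theorem convex_hull_boundary_point {B : Type*} [Fintype B] [DecidableEq B]
    (P : B → ℝ) (hP0 : ∀ b, 0 ≤ P b) (hP1 : ∑ b, P b = 1)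
    (γ₀ : ℝ) (hγ0 : 0 < γ₀) (hγ1 : γ₀ ≤ 1)
    (bk : B) (hq : P bk ≤ γ₀) (hq1 : P bk < 1)
    (α : ℝ) (hα : α = (1 - P bk / γ₀) / (1 - P bk))
    (Pk : B → ℝ)
    (hPk : ∀ b, Pk b = α * P b + (1 - α) * (if b = bk then (1 : ℝ) else 0)) :
    (∀ b, 0 ≤ Pk b) ∧ (∑ b, Pk b = 1) ∧
    (∀ b, γ₀ * Pk b ≤ P b) ∧ γ₀ * Pk bk = P bk := by
  replace hα : α = boundaryWeight γ₀ (P bk) := hα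
  have hPk_eq : Pk = α • P + (1 - α) • Pi.single bk 1 := by
    ext b
    simp [hPk, Pi.single_apply]
  have hmem : Pk ∈ stdSimplex ℝ B := hPk_eq ▸ smul_add_smul_single_mem_stdSimplex ⟨hP0, hP1⟩ bk
    (hα ▸ boundaryWeight_nonneg hγ0 hq hq1) (hα ▸ boundaryWeight_le_one hγ0 hγ1 (hP0 bk) hq1)
  have htight : γ₀ * Pk bk = P bk := by
    simpa [hPk, hα] using mul_boundaryWeight_mix_eq hγ0 hq1
  refine ⟨hmem.1, hmem.2, fun b => ?_, htight⟩
  by_cases hb : b = bk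
  · exact hb ▸ htight.le
  · calc γ₀ * Pk b = γ₀ * α * P b := by simp [hPk, hb, mul_assoc]
      _ ≤ 1 * P b := by
        gcongr
        · exact hP0 b
        · exact hα ▸ mul_boundaryWeight_le_one hγ0 hγ1 hq1
      _ = P b := one_mul _
end

section
/- Let B, X, Z be finite types and k : B → X → Z → ℝ a fixed nonnegative kernel with ∑_{x,z} k(b,x,z) = 1 for every b and m(b,z) := ∑_x k(b,x,z) > 0 for every b and z. For a probability vector p on B define F_p(x,z) = (∑_b k(b,x,z)·p(b)) / (∑_b m(b,z)·p(b)) (the conditional of X given Z = z under the joint obtained from prior p and kernel k). Then the following are equivalent: (i) F_p = F_{p'} for all probability vectors p, p' on B (zero variance of the effect-given-cause conditional across all source priors); (ii) there exists c : X → Z → ℝ, c ≥ 0, such that k(b,x,z) = c(x,z)·m(b,z) for all b, x, z (the conditional of X given Z = z and B = b does not depend on b, i.e. X is conditionally independent of B given Z). -/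
/-! Under the factorization `k b x z = c x z * m b z` the numerator of `F_p(x, z)` is `c x z` times
its denominator, which is positive for every prior, so `F_p = c`. Conversely, the point-mass prior
at `b` gives `F_p(x, z) = k b x z / m b z`, so invariance under the prior makes this ratio
independent of `b`, and it is the required `c`. -/

open Finset

lemma single_one_nonneg {B : Type*} [DecidableEq B] (b b' : B) :
    0 ≤ (Pi.single b 1 : B → ℝ) b' := by
  simp only [Pi.single_apply]
  positivity

section Prior

variable {B : Type*} [Fintype B]

lemma sum_mul_pos_of_sum_eq_one {g p : B → ℝ} (hg : ∀ b, 0 < g b) (hp0 : ∀ b, 0 ≤ p b)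
    (hp1 : ∑ b, p b = 1) : 0 < ∑ b, g b * p b := by
  obtain ⟨b, -, hb⟩ : ∃ b ∈ univ, (0 : B → ℝ) b < p b :=
    exists_lt_of_sum_lt (by simp [hp1])
  exact sum_pos' (fun b _ => mul_nonneg (hg b).le (hp0 b)) ⟨b, mem_univ b, mul_pos (hg b) hb⟩

lemma sum_mul_div_sum_mul_of_eq_mul {f g p : B → ℝ} {c : ℝ} (hf : ∀ b, f b = c * g b)
    (hg : ∑ b, g b * p b ≠ 0) : (∑ b, f b * p b) / ∑ b, g b * p b = c := by
  simp_rw [hf, mul_assoc, ← mul_sum]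
  exact mul_div_cancel_right₀ c hg

lemma sum_mul_single_one [DecidableEq B] (f : B → ℝ) (b : B) :
    ∑ b', f b' * (Pi.single b 1 : B → ℝ) b' = f b := by
  simp [Pi.single_apply]

lemma sum_single_one [DecidableEq B] (b : B) : ∑ b', (Pi.single b 1 : B → ℝ) b' = 1 := by
  simp

end Prior

theorem zero_variance_iff_conditional_independence_general
    {B X Z : Type*} [Fintype B] [Fintype X] [Fintype Z]
    (k : B → X → Z → ℝ) (hk0 : ∀ b x z, 0 ≤ k b x z)
    (hm : ∀ b z, 0 < ∑ x, k b x z) :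
    (∀ p p' : B → ℝ,
        (∀ b, 0 ≤ p b) → (∑ b, p b = 1) →
        (∀ b, 0 ≤ p' b) → (∑ b, p' b = 1) →
        ∀ x z, (∑ b, k b x z * p b) / (∑ b, (∑ x', k b x' z) * p b)
             = (∑ b, k b x z * p' b) / (∑ b, (∑ x', k b x' z) * p' b))
    ↔ (∃ c : X → Z → ℝ, (∀ x z, 0 ≤ c x z) ∧
        ∀ b x z, k b x z = c x z * (∑ x', k b x' z)) := by
  classical
  constructor
  · intro hinv
    obtain _ | ⟨⟨b₀⟩⟩ := isEmpty_or_nonempty B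
    · exact ⟨0, fun _ _ => le_rfl, fun b => isEmptyElim b⟩
    refine ⟨fun x z => k b₀ x z / ∑ x', k b₀ x' z,
      fun x z => div_nonneg (hk0 b₀ x z) (hm b₀ z).le, fun b x z => ?_⟩
    have hpoint := hinv (Pi.single b 1) (Pi.single b₀ 1)
      (single_one_nonneg b) (sum_single_one b)
      (single_one_nonneg b₀) (sum_single_one b₀) x z
    simp only [sum_mul_single_one] at hpoint
    show _ = _ / _ * _
    rw [← hpoint, div_mul_cancel₀ _ (hm b z).ne']
  · rintro ⟨c, -, hc⟩ p p' hp0 hp1 hp0' hp1' x z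
    rw [sum_mul_div_sum_mul_of_eq_mul (hc · x z) (sum_mul_pos_of_sum_eq_one (hm · z) hp0 hp1).ne',
      sum_mul_div_sum_mul_of_eq_mul (hc · x z) (sum_mul_pos_of_sum_eq_one (hm · z) hp0' hp1').ne']

/-- Zero-variance characterization: the conditional F_p(x,z) of effect X given
cause Z derived from the joint J_p(b,x,z) = p(b)·k(b,x,z) is invariant across
all source priors p iff the kernel factorizes as k(b,x,z) = c(x,z)·m(b,z) with
m(b,z) = ∑_x k(b,x,z), i.e. X is conditionally independent of B given Z. -/
theorem zero_variance_iff_conditional_independence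
    {B X Z : Type*} [Fintype B] [Fintype X] [Fintype Z]
    (k : B → X → Z → ℝ) (hk0 : ∀ b x z, 0 ≤ k b x z)
    (hk1 : ∀ b, ∑ x, ∑ z, k b x z = 1)
    (hm : ∀ b z, 0 < ∑ x, k b x z) :
    (∀ p p' : B → ℝ,
        (∀ b, 0 ≤ p b) → (∑ b, p b = 1) →
        (∀ b, 0 ≤ p' b) → (∑ b, p' b = 1) →
        ∀ x z, (∑ b, k b x z * p b) / (∑ b, (∑ x', k b x' z) * p b)
             = (∑ b, k b x z * p' b) / (∑ b, (∑ x', k b x' z) * p' b))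
    ↔ (∃ c : X → Z → ℝ, (∀ x z, 0 ≤ c x z) ∧
        ∀ b x z, k b x z = c x z * (∑ x', k b x' z)) :=
  zero_variance_iff_conditional_independence_general k hk0 hm
end
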